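/- arXiv:2306.07742 — 4 statements merged into one kernel-verified Lean document; each statement's English description precedes it below -/
import Mathlib

section
/- Let S ⊂ ℝ^n be a compact set, σ > 0, and h > 1. Then there exists a constant C depending only on h and n such that the Lebesgue measure of the open h·σ-neighborhood of S is at most C times the Lebesgue measure of the open σ-neighborhood of S; one may take C = (h+2)^n. -/
open MeasureTheory Metric Set

/-- Covering lemma: for `S ⊂ ℝⁿ` compact, `σ > 0`, `h > 1`, the volume of the open
`h·σ`-neighborhood of `S` is at most `(h+2)ⁿ` times the volume of the open
`σ`-neighborhood of `S`. -/
theorem neighborhood_volume_bound (n : ℕ) (S : Set (EuclideanSpace ℝ (Fin n)))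
    (hS : IsCompact S) (σ h : ℝ) (hσ : 0 < σ) (hh : 1 < h) :
    volume (Metric.thickening (h * σ) S) ≤
      ENNReal.ofReal ((h + 2) ^ n) * volume (Metric.thickening σ S) := by
  classical
  -- `P F` : `F` is a `2σ`-separated finite subset of `S`
  set P : Finset (EuclideanSpace ℝ (Fin n)) → Prop :=
    fun F => ↑F ⊆ S ∧ (F : Set (EuclideanSpace ℝ (Fin n))).Pairwise (fun x y => 2 * σ ≤ dist x y) with hP
  -- a finite `σ`-net for `S`
  obtain ⟨t, htfin, htcov⟩ : ∃ t : Set (EuclideanSpace ℝ (Fin n)), t.Finite ∧ S ⊆ ⋃ y ∈ t, ball y σ :=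
    Metric.totallyBounded_iff.mp hS.totallyBounded σ hσ
  have key : ∀ x ∈ S, ∃ c ∈ t, dist x c < σ := by
    intro x hx
    obtain ⟨c, hc, hxc⟩ := by simpa using htcov hx
    exact ⟨c, hc, by simpa [dist_comm] using hxc⟩
  choose! c hc1 hc2 using key
  -- cardinalities of separated sets are bounded
  have cardbound : ∀ F : Finset (EuclideanSpace ℝ (Fin n)), P F → F.card ≤ htfin.toFinset.card := by
    intro F hF
    apply Finset.card_le_card_of_injOn c
    · intro x hx
      exact htfin.mem_toFinset.mpr (hc1 x (hF.1 hx))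
    · intro x hx y hy hxy
      by_contra hne
      have hsep := hF.2 hx hy hne
      have : dist x y < 2 * σ := by
        calc dist x y ≤ dist x (c x) + dist (c y) y := by
              rw [hxy]; exact dist_triangle _ _ _
          _ < σ + σ := add_lt_add (hc2 x (hF.1 hx))
              (by rw [dist_comm]; exact hc2 y (hF.1 hy))
          _ = 2 * σ := by ring
      linarith
  -- take a separated set of maximal cardinality
  set K : Set ℕ := {k | ∃ F : Finset (EuclideanSpace ℝ (Fin n)), P F ∧ F.card = k} with hK
  have hK0 : 0 ∈ K := ⟨∅, ⟨by simp, by simp⟩, by simp⟩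
  have hKbdd : BddAbove K := by
    refine ⟨htfin.toFinset.card, ?_⟩
    rintro k ⟨F, hF, rfl⟩
    exact cardbound F hF
  have hmem := Nat.sSup_mem ⟨0, hK0⟩ hKbdd
  obtain ⟨F, hF, hFcard⟩ := hmem
  -- maximality: every point of `S` is within `2σ` of `F`
  have hnet : ∀ s ∈ S, ∃ x ∈ F, dist s x < 2 * σ := by
    intro s hs
    by_contra hcontra
    push_neg at hcontra
    have hsnot : s ∉ F := by
      intro hsF
      have := hcontra s hsF
      simp at this
      linarith
    have hP' : P (insert s F) := by
      constructor
      · intro x hx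
        rcases Finset.mem_insert.mp (by exact_mod_cast hx) with rfl | hxF
        · exact hs
        · exact hF.1 hxF
      · rw [Finset.coe_insert]
        apply Set.Pairwise.insert hF.2
        intro y hy hne
        have := hcontra y hy
        constructor
        · exact this
        · rwa [dist_comm]
    have hle : (insert s F).card ≤ sSup K := le_csSup hKbdd ⟨_, hP', rfl⟩
    rw [Finset.card_insert_of_notMem hsnot, hFcard] at hle
    omega
  -- the big thickening is covered by the enlarged balls
  have hcover : Metric.thickening (h * σ) S ⊆ ⋃ x ∈ F, ball x ((h + 2) * σ) := by
    intro y hy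
    obtain ⟨s, hs, hys⟩ := Metric.mem_thickening_iff.mp hy
    obtain ⟨x, hxF, hsx⟩ := hnet s hs
    refine Set.mem_biUnion hxF ?_
    have : dist y x < h * σ + 2 * σ := lt_of_le_of_lt (dist_triangle y s x) (by linarith)
    rw [mem_ball]
    linarith [this]
  -- the small balls are disjoint and inside the small thickening
  have hdisj : (F : Set (EuclideanSpace ℝ (Fin n))).PairwiseDisjoint (fun x => ball x σ) := by
    intro x hx y hy hne
    refine Set.disjoint_left.mpr fun z hzx hzy => ?_
    simp only [mem_ball] at hzx hzy
    have hsep := hF.2 hx hy hne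
    have : dist x y < 2 * σ := by
      calc dist x y ≤ dist x z + dist z y := dist_triangle _ _ _
        _ < σ + σ := add_lt_add (by rw [dist_comm]; exact hzx) hzy
        _ = 2 * σ := by ring
    linarith
  have hsub : (⋃ x ∈ F, ball x σ) ⊆ Metric.thickening σ S := by
    refine Set.iUnion₂_subset fun x hx => ?_
    exact Metric.ball_subset_thickening (hF.1 hx) σ
  -- volume computation
  have hσ2 : (0:ℝ) < (h + 2) * σ := by positivity
  have hball : ∀ x : EuclideanSpace ℝ (Fin n), volume (ball x ((h + 2) * σ))
      = ENNReal.ofReal ((h + 2) ^ n) * volume (ball x σ) := by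
    intro x
    rw [Measure.addHaar_ball_of_pos volume x hσ2, Measure.addHaar_ball_of_pos volume x hσ]
    rw [← mul_assoc, ← ENNReal.ofReal_mul (by positivity)]
    congr 2
    rw [finrank_euclideanSpace_fin]
    rw [mul_pow, mul_comm]
  calc volume (Metric.thickening (h * σ) S)
      ≤ volume (⋃ x ∈ F, ball x ((h + 2) * σ)) := measure_mono hcover
    _ ≤ ∑ x ∈ F, volume (ball x ((h + 2) * σ)) := measure_biUnion_finset_le F _
    _ = ENNReal.ofReal ((h + 2) ^ n) * ∑ x ∈ F, volume (ball x σ) := by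
        simp only [hball]; rw [Finset.mul_sum]
    _ = ENNReal.ofReal ((h + 2) ^ n) * volume (⋃ x ∈ F, ball x σ) := by
        rw [measure_biUnion_finset hdisj (fun x _ => measurableSet_ball)]
    _ ≤ ENNReal.ofReal ((h + 2) ^ n) * volume (Metric.thickening σ S) := by
        exact mul_le_mul_right (measure_mono hsub) _
end

section
/- Let μ be a finite Borel measure on ℝ^n whose support is contained in a union of balls {B_{ρ_i}(x_i)}_{i∈I} with radii ρ_i ≤ r for all i. Then there exists a constant ε_0 > 0 depending only on the dimension n such that for every R ≥ 2r there is a subfamily I' ⊂ I with: the balls {B_{2R}(x_i)}_{i∈I'} pairwise disjoint, and μ(⋃_{i∈I'} B_R(x_i)) ≥ ε_0 · μ(ℝ^n). -/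
open MeasureTheory Metric Set

/-- Covering lemma for measures supported in a union of balls with equibounded radii:
there is a dimensional constant `ε₀ > 0` such that for every `R ≥ 2r` one can select a
subfamily whose `2R`-balls are pairwise disjoint and whose `R`-balls capture at least an
`ε₀` fraction of the total mass. -/
theorem measure_covering_selection (n : ℕ) :
    ∃ ε₀ : ℝ, 0 < ε₀ ∧
      ∀ (ι : Type) (x : ι → EuclideanSpace ℝ (Fin n)) (ρ : ι → ℝ) (r : ℝ)
        (μ : Measure (EuclideanSpace ℝ (Fin n))), IsFiniteMeasure μ →
        0 < r → (∀ i, ρ i ≤ r) →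
        μ ((⋃ i, Metric.ball (x i) (ρ i))ᶜ) = 0 →
        ∀ R : ℝ, 2 * r ≤ R →
          ∃ I' : Set ι,
            (I'.Pairwise fun i j =>
              Disjoint (Metric.ball (x i) (2 * R)) (Metric.ball (x j) (2 * R))) ∧
            ENNReal.ofReal ε₀ * μ Set.univ ≤ μ (⋃ i ∈ I', Metric.ball (x i) R) := by
  classical
  set k : ℕ := 10 * n + 11 with hk
  haveI : NeZero k := ⟨by omega⟩
  refine ⟨((k : ℝ) ^ n)⁻¹, by positivity, ?_⟩
  intro ι x ρ r μ hfin hr hρ hnull R hR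
  by_cases hμ0 : μ Set.univ = 0
  · exact ⟨∅, by simp [Set.pairwise_empty], by simp [hμ0]⟩
  have hR0 : 0 < R := lt_of_lt_of_le (by linarith) hR
  set s : ℝ := R / (2 * (n + 1)) with hs
  have hs0 : 0 < s := by positivity
  -- basic arithmetic facts
  have hs_eq : ((n : ℝ) + 1) * s = R / 2 := by
    rw [hs]; field_simp
  have hk5 : ((k : ℝ) - 1) * s = 5 * R := by
    rw [hs, hk]; push_cast; field_simp; ring
  -- nonemptiness of ι
  have hιne : Nonempty ι := by
    rcases isEmpty_or_nonempty ι with h | h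
    · exfalso; apply hμ0
      have hE0 : (⋃ i, Metric.ball (x i) (ρ i)) = (∅ : Set (EuclideanSpace ℝ (Fin n))) :=
        iUnion_of_empty _
      rw [hE0, compl_empty] at hnull
      exact hnull
    · exact h
  set E : Set (EuclideanSpace ℝ (Fin n)) := ⋃ i, Metric.ball (x i) (ρ i) with hE
  -- floor cell facts
  have hmemcell : ∀ (t : ℝ) (a : ℤ), ⌊t / s⌋ = a → (a : ℝ) * s ≤ t ∧ t < ((a : ℝ) + 1) * s := by
    intro t a h
    rw [Int.floor_eq_iff] at h
    exact ⟨(le_div_iff₀ hs0).1 h.1, (div_lt_iff₀ hs0).1 h.2⟩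
  have hfl : ∀ t u : ℝ, ∀ a : ℤ, ⌊t / s⌋ = a → ⌊u / s⌋ = a → |t - u| ≤ s := by
    intro t u a ht hu
    obtain ⟨ht1, ht2⟩ := hmemcell t a ht
    obtain ⟨hu1, hu2⟩ := hmemcell u a hu
    have hexp : ((a : ℝ) + 1) * s = (a : ℝ) * s + s := by ring
    rw [abs_le]
    constructor <;> linarith
  have hsep : ∀ t u : ℝ, ∀ a b : ℤ, ⌊t / s⌋ = a → ⌊u / s⌋ = b → (k : ℤ) ≤ |a - b| →
      ((k : ℝ) - 1) * s ≤ |t - u| := by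
    intro t u a b ht hu habs
    obtain ⟨ht1, ht2⟩ := hmemcell t a ht
    obtain ⟨hu1, hu2⟩ := hmemcell u b hu
    have ha1 : ((a : ℝ) + 1) * s = (a : ℝ) * s + s := by ring
    have hb1 : ((b : ℝ) + 1) * s = (b : ℝ) * s + s := by ring
    rcases abs_cases (a - b) with ⟨heq, -⟩ | ⟨heq, -⟩
    · -- a - b ≥ k
      have hcast : (k : ℝ) ≤ (a : ℝ) - (b : ℝ) := by
        have : (k : ℤ) ≤ a - b := by omega
        exact_mod_cast this
      have hmul : (k : ℝ) * s ≤ ((a : ℝ) - (b : ℝ)) * s :=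
        mul_le_mul_of_nonneg_right hcast hs0.le
      have hexp : ((a : ℝ) - (b : ℝ)) * s = (a : ℝ) * s - (b : ℝ) * s := by ring
      have : ((k : ℝ) - 1) * s ≤ t - u := by nlinarith
      calc ((k : ℝ) - 1) * s ≤ t - u := this
        _ ≤ |t - u| := le_abs_self _
    · -- b - a ≥ k
      have hcast : (k : ℝ) ≤ (b : ℝ) - (a : ℝ) := by
        have : (k : ℤ) ≤ b - a := by omega
        exact_mod_cast this
      have hmul : (k : ℝ) * s ≤ ((b : ℝ) - (a : ℝ)) * s :=
        mul_le_mul_of_nonneg_right hcast hs0.le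
      have hexp : ((b : ℝ) - (a : ℝ)) * s = (b : ℝ) * s - (a : ℝ) * s := by ring
      have : ((k : ℝ) - 1) * s ≤ u - t := by nlinarith
      calc ((k : ℝ) - 1) * s ≤ u - t := this
        _ ≤ |t - u| := by rw [abs_sub_comm]; exact le_abs_self _
  -- coordinate vs distance facts
  have h1 : ∀ (w z : EuclideanSpace ℝ (Fin n)) (m : Fin n), |w m - z m| ≤ dist w z := by
    intro w z m
    rw [EuclideanSpace.dist_eq]
    have heq : |w m - z m| = Real.sqrt (dist (w m) (z m) ^ 2) := by
      rw [Real.sqrt_sq_eq_abs, Real.dist_eq, abs_abs]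
    rw [heq]
    apply Real.sqrt_le_sqrt
    exact Finset.single_le_sum (f := fun i => dist (w i) (z i) ^ 2)
      (fun i _ => sq_nonneg _) (Finset.mem_univ m)
  have h2 : ∀ (w z : EuclideanSpace ℝ (Fin n)), (∀ m, |w m - z m| ≤ s) →
      dist w z ≤ ((n : ℝ) + 1) * s := by
    intro w z h
    rw [EuclideanSpace.dist_eq]
    have hb : ∑ m, dist (w m) (z m) ^ 2 ≤ (n : ℝ) * s ^ 2 := by
      calc ∑ m, dist (w m) (z m) ^ 2 ≤ ∑ _m : Fin n, s ^ 2 := by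
            apply Finset.sum_le_sum
            intro m _
            rw [Real.dist_eq]
            exact pow_le_pow_left₀ (abs_nonneg (w m - z m)) (h m) 2
        _ = (n : ℝ) * s ^ 2 := by
            rw [Finset.sum_const, Finset.card_univ, Fintype.card_fin, nsmul_eq_mul]
    have hn0 : (0 : ℝ) ≤ n := Nat.cast_nonneg n
    calc Real.sqrt (∑ m, dist (w m) (z m) ^ 2)
        ≤ Real.sqrt ((((n : ℝ) + 1) * s) ^ 2) := by
          apply Real.sqrt_le_sqrt
          nlinarith [sq_nonneg s]
      _ = ((n : ℝ) + 1) * s := Real.sqrt_sq (by positivity)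
  -- cells and classes
  set cell : (Fin n → ℤ) → Set (EuclideanSpace ℝ (Fin n)) :=
    fun a => {w | ∀ m, ⌊w m / s⌋ = a m} with hcell
  set π : (Fin n → ℤ) → (Fin n → ZMod k) := fun a m => ((a m : ℤ) : ZMod k) with hπ
  set U : (Fin n → ZMod k) → Set (EuclideanSpace ℝ (Fin n)) :=
    fun c => ⋃ a ∈ {a | π a = c}, cell a with hU
  obtain ⟨c, hc⟩ : ∃ c, ∀ c', μ (U c') ≤ μ (U c) := Finite.exists_max _
  have hcover : (Set.univ : Set (EuclideanSpace ℝ (Fin n))) ⊆ ⋃ c', U c' := by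
    intro w _
    refine mem_iUnion.2 ⟨π (fun m => ⌊w m / s⌋), ?_⟩
    exact mem_iUnion₂.2 ⟨fun m => ⌊w m / s⌋, rfl, fun m => rfl⟩
  have hsum : μ Set.univ ≤ ((k : ENNReal)) ^ n * μ (U c) := by
    calc μ Set.univ ≤ μ (⋃ c', U c') := measure_mono hcover
      _ ≤ ∑ c', μ (U c') := measure_iUnion_fintype_le _ _
      _ ≤ ∑ _c' : Fin n → ZMod k, μ (U c) := Finset.sum_le_sum fun c' _ => hc c'
      _ = (Fintype.card (Fin n → ZMod k) : ENNReal) * μ (U c) := by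
          rw [Finset.sum_const, Finset.card_univ, nsmul_eq_mul]
      _ = ((k : ENNReal)) ^ n * μ (U c) := by
          rw [Fintype.card_fun, ZMod.card, Fintype.card_fin]
          push_cast
          ring
  -- selection
  set A : Set (Fin n → ℤ) := {a | π a = c ∧ (cell a ∩ E).Nonempty} with hA
  have hsel : ∀ a ∈ A, ∃ (i : ι) (w : EuclideanSpace ℝ (Fin n)),
      (∀ m, ⌊w m / s⌋ = a m) ∧ w ∈ Metric.ball (x i) (ρ i) := by
    rintro a ⟨-, w, hw1, hw2⟩
    obtain ⟨i, hi⟩ := mem_iUnion.1 hw2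
    exact ⟨i, w, hw1, hi⟩
  choose! idx pt hpt1 hpt2 using hsel
  refine ⟨idx '' A, ?_, ?_⟩
  · -- pairwise disjointness of 2R balls
    rintro _ ⟨a, ha, rfl⟩ _ ⟨b, hb, rfl⟩ hne
    have hab : a ≠ b := fun h => hne (by rw [h])
    obtain ⟨m, hm⟩ := Function.ne_iff.1 hab
    have hsame : ((a m : ℤ) : ZMod k) = ((b m : ℤ) : ZMod k) := by
      have h1' : π a m = c m := congrFun ha.1 m
      have h2' : π b m = c m := congrFun hb.1 m
      exact h1'.trans h2'.symm
    have hdvd : (k : ℤ) ∣ (b m - a m) :=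
      ((ZMod.intCast_eq_intCast_iff _ _ _).1 hsame).dvd
    have hkle : (k : ℤ) ≤ |a m - b m| := by
      have h0 : a m - b m ≠ 0 := sub_ne_zero.2 hm
      have hdvd' : (k : ℤ) ∣ (a m - b m) := dvd_sub_comm.1 hdvd
      exact Int.le_of_dvd (abs_pos.2 h0) ((dvd_abs _ _).2 hdvd')
    have hsepc : ((k : ℝ) - 1) * s ≤ |pt a m - pt b m| :=
      hsep _ _ _ _ (hpt1 a ha m) (hpt1 b hb m) hkle
    have hptdist : 5 * R ≤ dist (pt a) (pt b) := by
      rw [← hk5]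
      exact le_trans hsepc (h1 _ _ m)
    have hda : dist (pt a) (x (idx a)) < ρ (idx a) := mem_ball.1 (hpt2 a ha)
    have hdb : dist (pt b) (x (idx b)) < ρ (idx b) := mem_ball.1 (hpt2 b hb)
    have htri := dist_triangle4 (pt a) (x (idx a)) (x (idx b)) (pt b)
    have hdcomm : dist (x (idx b)) (pt b) = dist (pt b) (x (idx b)) := dist_comm _ _
    have hρa := hρ (idx a)
    have hρb := hρ (idx b)
    apply ball_disjoint_ball
    linarith
  · -- mass bound
    have hUc : μ (U c) ≤ μ (⋃ i ∈ idx '' A, Metric.ball (x i) R) := by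
      have hsub : U c ⊆ (⋃ i ∈ idx '' A, Metric.ball (x i) R) ∪ Eᶜ := by
        intro w hw
        obtain ⟨a, haπ, hwa⟩ := mem_iUnion₂.1 hw
        by_cases hwE : w ∈ E
        · have haA : a ∈ A := ⟨haπ, w, hwa, hwE⟩
          left
          refine mem_iUnion₂.2 ⟨idx a, mem_image_of_mem _ haA, ?_⟩
          have hco : ∀ m, |w m - pt a m| ≤ s :=
            fun m => hfl _ _ (a m) (hwa m) (hpt1 a haA m)
          have hd1 : dist w (pt a) ≤ ((n : ℝ) + 1) * s := h2 _ _ hco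
          have hd2 : dist (pt a) (x (idx a)) < ρ (idx a) := mem_ball.1 (hpt2 a haA)
          have htri := dist_triangle w (pt a) (x (idx a))
          have hρa := hρ (idx a)
          rw [mem_ball]
          linarith [hs_eq]
        · right; exact hwE
      calc μ (U c) ≤ μ ((⋃ i ∈ idx '' A, Metric.ball (x i) R) ∪ Eᶜ) := measure_mono hsub
        _ ≤ μ (⋃ i ∈ idx '' A, Metric.ball (x i) R) + μ Eᶜ := measure_union_le _ _
        _ = μ (⋃ i ∈ idx '' A, Metric.ball (x i) R) := by rw [hE, hnull, add_zero]
    have hof : ENNReal.ofReal (((k : ℝ) ^ n)⁻¹) * ((k : ENNReal)) ^ n = 1 := by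
      have e1 : ENNReal.ofReal (((k : ℝ) ^ n)⁻¹) = (((k : ENNReal)) ^ n)⁻¹ := by
        rw [ENNReal.ofReal_inv_of_pos (by positivity), ENNReal.ofReal_pow (by positivity),
          ENNReal.ofReal_natCast]
      rw [e1]
      exact ENNReal.inv_mul_cancel (by positivity) (by
        exact ENNReal.pow_ne_top (ENNReal.natCast_ne_top k))
    calc ENNReal.ofReal (((k : ℝ) ^ n)⁻¹) * μ Set.univ
        ≤ ENNReal.ofReal (((k : ℝ) ^ n)⁻¹) * (((k : ENNReal)) ^ n * μ (U c)) :=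
          mul_le_mul_right hsum _
      _ = (ENNReal.ofReal (((k : ℝ) ^ n)⁻¹) * ((k : ENNReal)) ^ n) * μ (U c) := by
          rw [mul_assoc]
      _ = μ (U c) := by rw [hof, one_mul]
      _ ≤ μ (⋃ i ∈ idx '' A, Metric.ball (x i) R) := hUc
end

section
/- Let Ω ⊂ ℝ^n be open, u : Ω → ℝ^N be in L¹(Ω), and let λ be a finite positive Borel measure on Ω. Suppose that for every closed coordinate cube Q(x,r) ⊂ Ω (center x, half side-length r) there exists a value u_{Q(x,r)} ∈ ℝ^N such that ∫_{Q(x,r)} |u − u_{Q(x,r)}| dy ≤ r · λ(Q(x,r)). Then u ∈ BV(Ω, ℝ^N) and |Du| ≤ C·λ for a constant C depending only on n. -/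
open MeasureTheory Metric Set Filter Topology
open scoped ENNReal

/-!
Pairing `u` with `∂ₑψ` is the limit of pairing it with the difference quotients
`t⁻¹ (ψ (· + t e) - ψ)`, which by translation invariance equal `t⁻¹ ∫ ψ (u (· - t e) - u)`.
So it suffices to bound `∫_K |u (y - v) - u y|` by `4·5ⁿ |v| λ(U)` on `K = tsupport ψ`.
Cover `K` by the grid cubes `Q(h k, h)`, `k ∈ ℤⁿ`, with `h ≈ |v|`. Comparing both `u (y - v)` and
`u y` with the value `c` attached to the doubled cube `Q(h k, 2h) ⊆ U` bounds the integral over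
`Q(h k, h)` by `4h λ(Q(h k, 2h))`, and the doubled cubes overlap at most `5ⁿ` times.
-/

theorem tendsto_integral_slope_mul {E : Type*} [NormedAddCommGroup E] [NormedSpace ℝ E]
    [MeasurableSpace E] [OpensMeasurableSpace E] [SecondCountableTopology E] {μ : Measure E}
    {ψ w : E → ℝ} (hψ : ContDiff ℝ 1 ψ) (hψc : HasCompactSupport ψ) (hw : Integrable w μ)
    (e : E) :
    Tendsto (fun t : ℝ => ∫ y, t⁻¹ * (ψ (y + t • e) - ψ y) * w y ∂μ) (𝓝[>] 0)
      (𝓝 (∫ y, fderiv ℝ ψ y e * w y ∂μ)) := by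
  obtain ⟨L, hL⟩ := hψ.lipschitzWith_of_hasCompactSupport hψc one_ne_zero
  have hslope : ∀ t : ℝ, 0 < t → ∀ y, ‖t⁻¹ * (ψ (y + t • e) - ψ y)‖ ≤ L * ‖e‖ := by
    intro t ht y
    rw [norm_mul, norm_inv, Real.norm_of_nonneg ht.le, inv_mul_le_iff₀ ht]
    calc ‖ψ (y + t • e) - ψ y‖ ≤ L * ‖y + t • e - y‖ := hL.norm_sub_le _ _
      _ = t * (L * ‖e‖) := by
        rw [add_sub_cancel_left, norm_smul, Real.norm_of_nonneg ht.le]; ring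
  refine tendsto_integral_filter_of_dominated_convergence (fun y => L * ‖e‖ * ‖w y‖) ?_ ?_
    (hw.norm.const_mul _) ?_
  · exact Eventually.of_forall fun t =>
      (((hψ.continuous.comp (continuous_add_const _)).sub hψ.continuous).const_mul
        _).aestronglyMeasurable.mul hw.aestronglyMeasurable
  · filter_upwards [self_mem_nhdsWithin] with t ht
    exact Eventually.of_forall fun y => by
      rw [norm_mul]; exact mul_le_mul_of_nonneg_right (hslope t ht y) (norm_nonneg _)
  · refine Eventually.of_forall fun y => Tendsto.mul_const _ ?_
    have hline : HasDerivAt (fun t : ℝ => ψ (y + t • e)) (fderiv ℝ ψ y e) 0 := by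
      have := ((hψ.differentiable one_ne_zero) (y + (0 : ℝ) • e)).hasFDerivAt.comp_hasDerivAt
        (0 : ℝ) (((hasDerivAt_id' (0 : ℝ)).smul_const e).const_add y)
      simpa [Function.comp_def] using this
    simpa using hline.tendsto_slope_zero_right

theorem integral_sub_comp_add_mul_eq {G : Type*} [NormedAddCommGroup G] [MeasurableSpace G]
    [OpensMeasurableSpace G] [MeasurableAdd G] (μ : Measure G) [μ.IsAddRightInvariant]
    {ψ w : G → ℝ} (hψ : Continuous ψ) (hψc : HasCompactSupport ψ) (hw : Integrable w μ) (v : G) :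
    ∫ y, (ψ (y + v) - ψ y) * w y ∂μ = ∫ y, ψ y * (w (y - v) - w y) ∂μ := by
  obtain ⟨C, hC⟩ := hψc.exists_bound_of_continuous hψ
  have hshift : Integrable (fun y => ψ (y + v) * w y) μ :=
    hw.bdd_mul (hψ.comp (continuous_add_const v)).aestronglyMeasurable (ae_of_all _ fun _ => hC _)
  have hψw : Integrable (fun y => ψ y * w y) μ :=
    hw.bdd_mul hψ.aestronglyMeasurable (ae_of_all _ hC)
  have hψw' : Integrable (fun y => ψ y * w (y - v)) μ :=
    (hw.comp_sub_right v).bdd_mul hψ.aestronglyMeasurable (ae_of_all _ hC)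
  calc ∫ y, (ψ (y + v) - ψ y) * w y ∂μ = ∫ y, ψ (y + v) * w y ∂μ - ∫ y, ψ y * w y ∂μ := by
        simp_rw [sub_mul]; exact integral_sub hshift hψw
    _ = ∫ y, ψ y * w (y - v) ∂μ - ∫ y, ψ y * w y ∂μ := by
        simpa using congrArg (· - ∫ y, ψ y * w y ∂μ)
          (integral_add_right_eq_self (μ := μ) (fun y => ψ y * w (y - v)) v)
    _ = ∫ y, ψ y * (w (y - v) - w y) ∂μ := by
        simp_rw [mul_sub]; exact (integral_sub hψw' hψw).symm

theorem integral_mul_le_setIntegral_norm_tsupport {X : Type*} [TopologicalSpace X]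
    [MeasurableSpace X] [OpensMeasurableSpace X] {μ : Measure X} {ψ g : X → ℝ}
    (hψ1 : ∀ y, |ψ y| ≤ 1) (hg : Integrable g μ) :
    ∫ y, ψ y * g y ∂μ ≤ ∫ y in tsupport ψ, ‖g y‖ ∂μ := by
  have hK := (isClosed_tsupport ψ).measurableSet
  rw [← integral_indicator hK]
  refine (le_abs_self _).trans <| (abs_integral_le_integral_abs).trans <|
    integral_mono_of_nonneg (ae_of_all _ fun _ => abs_nonneg _) (hg.norm.indicator hK)
      (ae_of_all _ fun y => ?_)
  by_cases hy : y ∈ tsupport ψ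
  · rw [indicator_of_mem hy]
    dsimp only
    rw [abs_mul, Real.norm_eq_abs]
    exact mul_le_of_le_one_left (abs_nonneg _) (hψ1 y)
  · simp [indicator_of_notMem hy, image_eq_zero_of_notMem_tsupport hy]

theorem integral_fderiv_mul_le_of_setIntegral_norm_sub_le {E : Type*} [NormedAddCommGroup E]
    [NormedSpace ℝ E] [MeasurableSpace E] [BorelSpace E] [SecondCountableTopology E]
    {μ : Measure E} [μ.IsAddRightInvariant] {ψ w : E → ℝ} (hψ : ContDiff ℝ 1 ψ)
    (hψc : HasCompactSupport ψ) (hψ1 : ∀ y, |ψ y| ≤ 1) (hw : Integrable w μ) (e : E) {B : ℝ}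
    (hB : ∀ᶠ t in 𝓝[>] (0 : ℝ), ∫ y in tsupport ψ, ‖w (y - t • e) - w y‖ ∂μ ≤ B * t) :
    ∫ y, fderiv ℝ ψ y e * w y ∂μ ≤ B := by
  refine le_of_tendsto (tendsto_integral_slope_mul hψ hψc hw e) ?_
  filter_upwards [hB, self_mem_nhdsWithin] with t ht (htpos : 0 < t)
  calc ∫ y, t⁻¹ * (ψ (y + t • e) - ψ y) * w y ∂μ
      = t⁻¹ * ∫ y, ψ y * (w (y - t • e) - w y) ∂μ := by
        simp_rw [mul_assoc]
        rw [integral_const_mul, integral_sub_comp_add_mul_eq μ hψ.continuous hψc hw]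
    _ ≤ t⁻¹ * ∫ y in tsupport ψ, ‖w (y - t • e) - w y‖ ∂μ := by
        gcongr
        exact integral_mul_le_setIntegral_norm_tsupport hψ1 ((hw.comp_sub_right _).sub hw)
    _ ≤ t⁻¹ * (B * t) := by gcongr
    _ = B := by field_simp

theorem setLIntegral_enorm_comp_sub_sub_le {G F : Type*} [AddGroup G] [MeasurableSpace G]
    [MeasurableAdd G] [NormedAddCommGroup F] (μ : Measure G) [μ.IsAddRightInvariant]
    {f : G → F} {A B : Set G} (hf : AEStronglyMeasurable f (μ.restrict B)) (hAB : A ⊆ B)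
    {v : G} (hAv : ∀ y ∈ A, y - v ∈ B) (c : F) :
    ∫⁻ y in A, ‖f (y - v) - f y‖ₑ ∂μ ≤ 2 * ∫⁻ y in B, ‖f y - c‖ₑ ∂μ := by
  have hfA : AEMeasurable (fun y => ‖f y - c‖ₑ) (μ.restrict A) :=
    ((hf.mono_measure (Measure.restrict_mono hAB le_rfl)).sub aestronglyMeasurable_const).enorm
  calc ∫⁻ y in A, ‖f (y - v) - f y‖ₑ ∂μ
      ≤ ∫⁻ y in A, (‖f (y - v) - c‖ₑ + ‖f y - c‖ₑ) ∂μ := lintegral_mono fun y => by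
        rw [← sub_sub_sub_cancel_right _ _ c]; exact enorm_sub_le
    _ = ∫⁻ y in A, ‖f (y - v) - c‖ₑ ∂μ + ∫⁻ y in A, ‖f y - c‖ₑ ∂μ := lintegral_add_right' _ hfA
    _ ≤ ∫⁻ y in B, ‖f y - c‖ₑ ∂μ + ∫⁻ y in B, ‖f y - c‖ₑ ∂μ := by
      gcongr ?_ + ?_
      · calc _ ≤ ∫⁻ y in (· - v) ⁻¹' B, ‖f (y - v) - c‖ₑ ∂μ := lintegral_mono_set hAv
          _ = _ := (measurePreserving_sub_right μ v).setLIntegral_comp_preimage_emb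
              (measurableEmbedding_subRight v) (fun z => ‖f z - c‖ₑ) B
      · exact lintegral_mono_set hAB
    _ = 2 * ∫⁻ y in B, ‖f y - c‖ₑ ∂μ := (two_mul _).symm

theorem setLIntegral_enorm_comp_sub_sub_le_of_closedBall {E F : Type*} [NormedAddCommGroup E]
    [MeasurableSpace E] [BorelSpace E] [ProperSpace E] [NormedAddCommGroup F] (μ : Measure E)
    [μ.IsAddRightInvariant] [IsFiniteMeasureOnCompacts μ] (lam : Measure E)
    [IsFiniteMeasureOnCompacts lam] {u : E → F} {x : E} {h : ℝ} (hh : 0 ≤ h)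
    (hu : IntegrableOn u (closedBall x (2 * h)) μ) {c : F}
    (hc : ∫ y in closedBall x (2 * h), ‖u y - c‖ ∂μ ≤ 2 * h * (lam (closedBall x (2 * h))).toReal)
    {v : E} (hv : ‖v‖ ≤ h) :
    ∫⁻ y in closedBall x h, ‖u (y - v) - u y‖ₑ ∂μ ≤
      ENNReal.ofReal (4 * h) * lam (closedBall x (2 * h)) := by
  have hAv : ∀ y ∈ closedBall x h, y - v ∈ closedBall x (2 * h) := fun y hy => by
    rw [mem_closedBall] at hy ⊢
    calc dist (y - v) x ≤ dist (y - v) y + dist y x := dist_triangle _ _ _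
      _ ≤ h + h := by
        gcongr
        rwa [dist_eq_norm, sub_sub_cancel_left, norm_neg]
      _ = 2 * h := by ring
  have hint : IntegrableOn (fun y => u y - c) (closedBall x (2 * h)) μ :=
    hu.sub (integrableOn_const measure_closedBall_lt_top.ne)
  calc ∫⁻ y in closedBall x h, ‖u (y - v) - u y‖ₑ ∂μ
      ≤ 2 * ∫⁻ y in closedBall x (2 * h), ‖u y - c‖ₑ ∂μ :=
        setLIntegral_enorm_comp_sub_sub_le μ hu.aestronglyMeasurable
          (closedBall_subset_closedBall (by linarith)) hAv c
    _ = 2 * ENNReal.ofReal (∫ y in closedBall x (2 * h), ‖u y - c‖ ∂μ) := by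
      rw [ofReal_integral_norm_eq_lintegral_enorm hint]
    _ ≤ 2 * ENNReal.ofReal (2 * h * (lam (closedBall x (2 * h))).toReal) := by gcongr
    _ = ENNReal.ofReal (4 * h) * lam (closedBall x (2 * h)) := by
      rw [ENNReal.ofReal_mul (by positivity), ENNReal.ofReal_toReal measure_closedBall_lt_top.ne,
        ← mul_assoc, ← ENNReal.ofReal_ofNat 2, ← ENNReal.ofReal_mul zero_le_two]
      ring_nf

theorem tsum_measure_le_of_tsum_indicator_le {α ι : Type*} [MeasurableSpace α] [Countable ι]
    (μ : Measure α) {B : ι → Set α} {U : Set α} (hB : ∀ k, MeasurableSet (B k))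
    (hBU : ∀ k, B k ⊆ U) {M : ℝ≥0∞} (hM : ∀ y, ∑' k, (B k).indicator 1 y ≤ M) :
    ∑' k, μ (B k) ≤ M * μ U := by
  have hsupp : (Function.support fun y => ∑' k, (B k).indicator (1 : α → ℝ≥0∞) y) ⊆ U := by
    intro y hy
    obtain ⟨k, hk⟩ := not_forall.mp (mt ENNReal.tsum_eq_zero.mpr hy)
    exact hBU k (Set.mem_of_indicator_ne_zero hk)
  calc ∑' k, μ (B k) = ∫⁻ y, ∑' k, (B k).indicator 1 y ∂μ := by
        rw [lintegral_tsum fun k => (measurable_one.indicator (hB k)).aemeasurable]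
        simp only [lintegral_indicator_one (hB _)]
    _ = ∫⁻ y in U, ∑' k, (B k).indicator 1 y ∂μ := (setLIntegral_eq_of_support_subset hsupp).symm
    _ ≤ ∫⁻ _ in U, M ∂μ := lintegral_mono fun y => hM y
    _ = M * μ U := setLIntegral_const U M

section Grid

variable {n : ℕ} {h : ℝ}

theorem mem_Icc_floor_of_abs_sub_le (hh : 0 < h) {a : ℝ} {m : ℤ} (ham : |a - h * m| ≤ 2 * h) :
    m ∈ Finset.Icc (⌊a / h⌋ - 2) (⌊a / h⌋ + 2) := by
  rw [abs_le] at ham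
  have hup : a / h ≤ m + 2 := by rw [div_le_iff₀ hh]; linarith
  have hlow : (m : ℝ) - 2 ≤ a / h := by rw [le_div_iff₀ hh]; linarith
  rw [Finset.mem_Icc, sub_le_iff_le_add, ← Int.lt_add_one_iff, ← sub_le_iff_le_add,
    Int.floor_lt, Int.le_floor]
  push_cast
  constructor <;> linarith

theorem mem_closedBall_floor_grid (hh : 0 < h) (y : Fin n → ℝ) :
    y ∈ closedBall (fun i => h * ⌊y i / h⌋) h := by
  rw [mem_closedBall, dist_pi_le_iff hh.le]
  intro i
  have hlow : h * ⌊y i / h⌋ ≤ y i := by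
    rw [← le_div_iff₀' hh]; exact Int.floor_le _
  have hup : y i < h * ⌊y i / h⌋ + h := by
    have := (div_lt_iff₀' hh).mp (Int.lt_floor_add_one (y i / h))
    rwa [mul_add, mul_one] at this
  rw [Real.dist_eq, abs_le]
  constructor <;> linarith

theorem tsum_indicator_closedBall_grid_le (hh : 0 < h) (y : Fin n → ℝ) :
    ∑' k : Fin n → ℤ, (closedBall (fun i => h * k i) (2 * h)).indicator 1 y ≤ (5 : ℝ≥0∞) ^ n := by
  classical
  set s := Fintype.piFinset fun i => Finset.Icc (⌊y i / h⌋ - 2) (⌊y i / h⌋ + 2)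
  have hs : ∀ k, y ∈ closedBall (fun i => h * k i) (2 * h) → k ∈ s := fun k hk =>
    Fintype.mem_piFinset.mpr fun i => mem_Icc_floor_of_abs_sub_le hh <|
      (Real.dist_eq _ _).symm.trans_le ((dist_le_pi_dist _ _ i).trans (mem_closedBall.mp hk))
  rw [tsum_eq_sum (s := s) fun k hk => indicator_of_notMem (mt (hs k) hk) _]
  calc ∑ k ∈ s, (closedBall (fun i => h * k i) (2 * h)).indicator 1 y
      ≤ ∑ _k ∈ s, (1 : ℝ≥0∞) := Finset.sum_le_sum fun k _ => indicator_le_self' (by simp) y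
    _ = 5 ^ n := by
      have h5 : ∀ z : ℤ, z + 2 + 1 - (z - 2) = 5 := fun z => by ring
      simp [s, Fintype.card_piFinset, h5]

theorem setLIntegral_le_of_forall_closedBall_le (μ lam : Measure (Fin n → ℝ))
    {K U : Set (Fin n → ℝ)} (hh : 0 < h) (hKU : cthickening (3 * h) K ⊆ U) (hU : MeasurableSet U)
    {g : (Fin n → ℝ) → ℝ≥0∞} {c : ℝ≥0∞}
    (hg : ∀ x, closedBall x (2 * h) ⊆ U →
      ∫⁻ y in closedBall x h, g y ∂μ ≤ c * lam (closedBall x (2 * h))) :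
    ∫⁻ y in K, g y ∂μ ≤ c * (5 ^ n * lam U) := by
  set cen : (Fin n → ℤ) → (Fin n → ℝ) := fun k i => h * k i
  have hcover : K ⊆ ⋃ k, closedBall (cen k) h ∩ K := fun y hy =>
    mem_iUnion.mpr ⟨fun i => ⌊y i / h⌋, mem_closedBall_floor_grid hh y, hy⟩
  have hpiece : ∀ k, ∫⁻ y in closedBall (cen k) h ∩ K, g y ∂μ ≤
      c * lam (closedBall (cen k) (2 * h) ∩ U) := by
    intro k
    rcases (closedBall (cen k) h ∩ K).eq_empty_or_nonempty with hempty | ⟨z, hzk, hzK⟩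
    · simp [hempty]
    · have hsub : closedBall (cen k) (2 * h) ⊆ U := fun y hy =>
        hKU <| mem_cthickening_of_dist_le y z _ K hzK <| by
          calc dist y z ≤ dist y (cen k) + dist z (cen k) := dist_triangle_right _ _ _
            _ ≤ 2 * h + h := add_le_add (mem_closedBall.mp hy) (mem_closedBall.mp hzk)
            _ = 3 * h := by ring
      rw [inter_eq_left.mpr hsub]
      exact (lintegral_mono_set inter_subset_left).trans (hg _ hsub)
  have hoverlap : ∑' k, lam (closedBall (cen k) (2 * h) ∩ U) ≤ 5 ^ n * lam U :=
    tsum_measure_le_of_tsum_indicator_le lam (fun _ => measurableSet_closedBall.inter hU)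
      (fun _ => inter_subset_right) fun y =>
        (ENNReal.tsum_le_tsum fun _ => indicator_le_indicator_of_subset inter_subset_left
          (by simp) y).trans (tsum_indicator_closedBall_grid_le hh y)
  calc ∫⁻ y in K, g y ∂μ ≤ ∫⁻ y in ⋃ k, closedBall (cen k) h ∩ K, g y ∂μ :=
        lintegral_mono_set hcover
    _ ≤ ∑' k, ∫⁻ y in closedBall (cen k) h ∩ K, g y ∂μ := lintegral_iUnion_le _ _
    _ ≤ ∑' k, c * lam (closedBall (cen k) (2 * h) ∩ U) := ENNReal.tsum_le_tsum hpiece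
    _ = c * ∑' k, lam (closedBall (cen k) (2 * h) ∩ U) := ENNReal.tsum_mul_left
    _ ≤ c * (5 ^ n * lam U) := by gcongr

end Grid

def CubeOscillationBound {n : ℕ} {F : Type*} [NormedAddCommGroup F] (Ω : Set (Fin n → ℝ))
    (lam : Measure (Fin n → ℝ)) (u : (Fin n → ℝ) → F) : Prop :=
  ∀ (x : Fin n → ℝ) (r : ℝ), 0 < r → closedBall x r ⊆ Ω →
    ∃ c : F, ∫ y in closedBall x r, ‖u y - c‖ ≤ r * (lam (closedBall x r)).toReal

theorem setLIntegral_enorm_comp_sub_sub_le_of_cube_oscillation {n : ℕ} {F : Type*}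
    [NormedAddCommGroup F] {Ω U K : Set (Fin n → ℝ)} {u : (Fin n → ℝ) → F}
    (hu : IntegrableOn u Ω) (lam : Measure (Fin n → ℝ)) [IsFiniteMeasureOnCompacts lam]
    (hcube : CubeOscillationBound Ω lam u)
    (hU : MeasurableSet U) (hUΩ : U ⊆ Ω) {h : ℝ} (hh : 0 < h)
    (hKU : cthickening (3 * h) K ⊆ U) {v : Fin n → ℝ} (hv : ‖v‖ ≤ h) :
    ∫⁻ y in K, ‖u (y - v) - u y‖ₑ ≤ ENNReal.ofReal (4 * h) * (5 ^ n * lam U) := by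
  refine setLIntegral_le_of_forall_closedBall_le volume lam hh hKU hU fun x hx => ?_
  obtain ⟨c, hc⟩ := hcube x (2 * h) (by positivity) (hx.trans hUΩ)
  exact setLIntegral_enorm_comp_sub_sub_le_of_closedBall volume lam hh.le
    (hu.mono_set (hx.trans hUΩ)) hc hv

theorem integral_mul_fderiv_le_of_cube_oscillation {n N : ℕ} {Ω U : Set (Fin n → ℝ)}
    {u : (Fin n → ℝ) → (Fin N → ℝ)} (hu : IntegrableOn u Ω) (lam : Measure (Fin n → ℝ))
    [IsFiniteMeasure lam] (hcube : CubeOscillationBound Ω lam u)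
    (hU : IsOpen U) (hUΩ : U ⊆ Ω) {ψ : (Fin n → ℝ) → ℝ} (hψ : ContDiff ℝ 1 ψ)
    (hψc : HasCompactSupport ψ) (hψU : tsupport ψ ⊆ U) (hψ1 : ∀ y, |ψ y| ≤ 1)
    {e : Fin n → ℝ} (he : ‖e‖ ≤ 1) (i : Fin N) :
    ∫ y in Ω, u y i * fderiv ℝ ψ y e ≤ 4 * 5 ^ n * (lam U).toReal := by
  set K := tsupport ψ
  -- Localizing to `U` makes `w` integrable on the whole space, where translations act.
  set w := U.indicator fun y => u y i
  have hui : IntegrableOn (fun y => u y i) U := (hu.mono_set hUΩ).eval i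
  have hw : Integrable w := hui.integrable_indicator hU.measurableSet
  have hlocal : ∫ y in Ω, u y i * fderiv ℝ ψ y e = ∫ y, fderiv ℝ ψ y e * w y := by
    have hzero : ∀ y ∉ U, fderiv ℝ ψ y = 0 := fun y hy =>
      fderiv_of_notMem_tsupport ℝ fun hyK => hy (hψU hyK)
    rw [setIntegral_eq_integral_of_forall_compl_eq_zero fun y hy => by
      simp [hzero y fun hyU => hy (hUΩ hyU)]]
    refine integral_congr_ae (ae_of_all _ fun y => ?_)
    by_cases hy : y ∈ U
    · simp [w, indicator_of_mem hy, mul_comm]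
    · simp [w, indicator_of_notMem hy, hzero y hy]
  rw [hlocal]
  refine integral_fderiv_mul_le_of_setIntegral_norm_sub_le hψ hψc hψ1 hw e ?_
  obtain ⟨δ, hδ, hKU⟩ := IsCompact.exists_cthickening_subset_open hψc hU hψU
  filter_upwards [Ioo_mem_nhdsGT (by positivity : 0 < δ / 3)] with t ⟨ht, htδ⟩
  have hv : ‖t • e‖ ≤ t := by
    rw [norm_smul, Real.norm_of_nonneg ht.le]; exact mul_le_of_le_one_right ht.le he
  have hKt : cthickening (3 * t) K ⊆ U := (cthickening_mono (by linarith) K).trans hKU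
  have hpt : ∀ y ∈ K, ‖w (y - t • e) - w y‖ₑ ≤ ‖u (y - t • e) - u y‖ₑ := fun y hy => by
    have hyt : y - t • e ∈ U := hKt <| mem_cthickening_of_dist_le _ y _ K hy <| by
      rw [dist_eq_norm, sub_sub_cancel_left, norm_neg]; linarith
    simp only [w, indicator_of_mem hyt, indicator_of_mem (hKt (self_subset_cthickening K hy))]
    rw [enorm_le_iff_norm_le, ← Pi.sub_apply]
    exact norm_le_pi_norm _ i
  calc ∫ y in K, ‖w (y - t • e) - w y‖
      = (∫⁻ y in K, ‖w (y - t • e) - w y‖ₑ).toReal :=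
        integral_norm_eq_lintegral_enorm
          ((hw.comp_sub_right _).sub hw).aestronglyMeasurable.restrict
    _ ≤ (ENNReal.ofReal (4 * t) * (5 ^ n * lam U)).toReal := by
        refine ENNReal.toReal_mono (by finiteness) ?_
        exact (setLIntegral_mono' (isClosed_tsupport ψ).measurableSet hpt).trans
          (setLIntegral_enorm_comp_sub_sub_le_of_cube_oscillation hu lam hcube hU.measurableSet
            hUΩ ht hKt hv)
    _ = 4 * 5 ^ n * (lam U).toReal * t := by
        simp [ENNReal.toReal_mul, ENNReal.toReal_ofReal ht.le]; ring

theorem integrable_mul_fderiv_apply {E ι : Type*} [NormedAddCommGroup E] [NormedSpace ℝ E]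
    [MeasurableSpace E] [OpensMeasurableSpace E] [Fintype ι] {μ : Measure E} {f : E → ℝ}
    (hf : Integrable f μ) {φ : E → ι → ℝ} (hφ : ContDiff ℝ 1 φ) (hφc : HasCompactSupport φ)
    (v : E) (j : ι) :
    Integrable (fun y => f y * fderiv ℝ φ y v j) μ :=
  hf.mul_of_top_left <| Continuous.memLp_top_of_hasCompactSupport
    ((continuous_apply j).comp ((hφ.continuous_fderiv one_ne_zero).clm_apply continuous_const))
    ((hφc.fderiv ℝ).comp_left (g := fun L : E →L[ℝ] ι → ℝ => L v j) rfl) _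

theorem integral_mul_fderiv_apply_le_of_cube_oscillation {n N : ℕ} {Ω U : Set (Fin n → ℝ)}
    {u : (Fin n → ℝ) → (Fin N → ℝ)} (hu : IntegrableOn u Ω) (lam : Measure (Fin n → ℝ))
    [IsFiniteMeasure lam] (hcube : CubeOscillationBound Ω lam u)
    (hU : IsOpen U) (hUΩ : U ⊆ Ω) {φ : (Fin n → ℝ) → (Fin n → ℝ)} (hφ : ContDiff ℝ 1 φ)
    (hφc : HasCompactSupport φ) (hφU : tsupport φ ⊆ U) (hφ1 : ∀ y, ‖φ y‖ ≤ 1) (i : Fin N)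
    (j : Fin n) :
    ∫ y in Ω, u y i * fderiv ℝ φ y (Pi.single j 1) j ≤ 4 * 5 ^ n * (lam U).toReal := by
  have hderiv : ∀ y, fderiv ℝ (fun z => φ z j) y (Pi.single j 1) =
      fderiv ℝ φ y (Pi.single j 1) j := fun y => by
    rw [fderiv_apply ((hφ.differentiable one_ne_zero) y) j]; rfl
  have hψc : HasCompactSupport fun z => φ z j := hφc.comp_left (g := fun x : Fin n → ℝ => x j) rfl
  have hψU : tsupport (fun z => φ z j) ⊆ U :=
    (tsupport_comp_subset (g := fun x : Fin n → ℝ => x j) rfl φ).trans hφU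
  have hψ1 : ∀ y, |φ y j| ≤ 1 := fun y =>
    (Real.norm_eq_abs _ ▸ norm_le_pi_norm (φ y) j).trans (hφ1 y)
  simpa only [hderiv] using integral_mul_fderiv_le_of_cube_oscillation hu lam hcube hU hUΩ
    (ψ := fun z => φ z j) ((contDiff_apply ℝ ℝ j).comp hφ) hψc hψU hψ1 (e := Pi.single j 1)
    (by rw [Pi.norm_single, norm_one]) i

theorem bv_criterion_from_cube_oscillation_general (n N : ℕ) (Ω : Set (Fin n → ℝ))
    (u : (Fin n → ℝ) → (Fin N → ℝ))
    (hu : Integrable u (volume.restrict Ω))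
    (lam : Measure (Fin n → ℝ)) (hlam : IsFiniteMeasure lam)
    (hcube : ∀ (x : Fin n → ℝ) (r : ℝ), 0 < r → Metric.closedBall x r ⊆ Ω →
      ∃ c : Fin N → ℝ,
        (∫ y in Metric.closedBall x r, ‖u y - c‖) ≤
          r * (lam (Metric.closedBall x r)).toReal) :
    ∃ C : ℝ, 0 < C ∧
      ∀ U : Set (Fin n → ℝ), IsOpen U → U ⊆ Ω →
        ∀ φ : Fin N → (Fin n → ℝ) → (Fin n → ℝ),
          (∀ i, ContDiff ℝ 1 (φ i)) → (∀ i, HasCompactSupport (φ i)) →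
          (∀ i, tsupport (φ i) ⊆ U) → (∀ i x, ‖φ i x‖ ≤ 1) →
          (∫ y in Ω, ∑ i, u y i * ∑ j, fderiv ℝ (φ i) y (Pi.single j 1) j) ≤
            C * (lam U).toReal := by
  refine ⟨4 * 5 ^ n * n * N + 1, by positivity, fun U hU hUΩ φ hφ hφc hφU hφ1 => ?_⟩
  have hint : ∀ i j, Integrable (fun y => u y i * fderiv ℝ (φ i) y (Pi.single j 1) j)
      (volume.restrict Ω) := fun i j =>
    integrable_mul_fderiv_apply (hu.eval i) (hφ i) (hφc i) _ j
  calc _ = ∑ i, ∑ j, ∫ y in Ω, u y i * fderiv ℝ (φ i) y (Pi.single j 1) j := by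
        simp_rw [Finset.mul_sum]
        rw [integral_finsetSum _ fun i _ => integrable_finsetSum _ fun j _ => hint i j]
        exact Finset.sum_congr rfl fun i _ => integral_finsetSum _ fun j _ => hint i j
    _ ≤ ∑ _i : Fin N, ∑ _j : Fin n, 4 * 5 ^ n * (lam U).toReal := by
        gcongr with i _ j _
        exact integral_mul_fderiv_apply_le_of_cube_oscillation hu lam hcube hU hUΩ (hφ i) (hφc i)
          (hφU i) (hφ1 i) i j
    _ ≤ (4 * 5 ^ n * n * N + 1) * (lam U).toReal := by
        simp only [Finset.sum_const, Finset.card_univ, Fintype.card_fin, nsmul_eq_mul]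
        nlinarith [ENNReal.toReal_nonneg (a := lam U)]

/-- Lemma 4.2 (abstract BV criterion). We work in `ℝⁿ` with the sup-norm, so that closed
coordinate cubes `Q(x,r)` of center `x` and half side-length `r` are exactly closed balls.
If `u ∈ L¹(Ω; ℝᴺ)` admits, on each cube `Q(x,r) ⊆ Ω`, a value `c` with
`∫_{Q(x,r)} |u − c| ≤ r · λ(Q(x,r))`, then `u ∈ BV(Ω; ℝᴺ)` with `|Du| ≤ C·λ` for a
dimensional constant `C`; the conclusion is expressed distributionally: for every open
`U ⊆ Ω` and every `C¹` test vector field `φ = (φ₁,…,φ_N)` compactly supported in `U` with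
`‖φᵢ‖ ≤ 1`, the pairing of `u` with the divergence of `φ` is at most `C·λ(U)`. -/
theorem bv_criterion_from_cube_oscillation (n N : ℕ) (Ω : Set (Fin n → ℝ))
    (hΩ : IsOpen Ω)
    (u : (Fin n → ℝ) → (Fin N → ℝ))
    (hu : Integrable u (volume.restrict Ω))
    (lam : Measure (Fin n → ℝ)) (hlam : IsFiniteMeasure lam)
    (hcube : ∀ (x : Fin n → ℝ) (r : ℝ), 0 < r → Metric.closedBall x r ⊆ Ω →
      ∃ c : Fin N → ℝ,
        (∫ y in Metric.closedBall x r, ‖u y - c‖) ≤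
          r * (lam (Metric.closedBall x r)).toReal) :
    ∃ C : ℝ, 0 < C ∧
      ∀ U : Set (Fin n → ℝ), IsOpen U → U ⊆ Ω →
        ∀ φ : Fin N → (Fin n → ℝ) → (Fin n → ℝ),
          (∀ i, ContDiff ℝ 1 (φ i)) → (∀ i, HasCompactSupport (φ i)) →
          (∀ i, tsupport (φ i) ⊆ U) → (∀ i x, ‖φ i x‖ ≤ 1) →
          (∫ y in Ω, ∑ i, u y i * ∑ j, fderiv ℝ (φ i) y (Pi.single j 1) j) ≤
            C * (lam U).toReal :=
  bv_criterion_from_cube_oscillation_general n N Ω u hu lam hlam hcube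
end

section
/- For every 2×2 real matrix M, |M − Cof M|² ≤ 4·dist²(M, SO(2)), where Cof M is the cofactor matrix of M and dist(M, SO(2)) = inf_{R ∈ SO(2)} |M − R| in the Frobenius norm. -/
open scoped Matrix

/-- Frobenius norm of a 2×2 real matrix. -/
noncomputable def frob (M : Matrix (Fin 2) (Fin 2) ℝ) : ℝ :=
  Real.sqrt (∑ i, ∑ j, (M i j) ^ 2)

/-- The rotation group SO(2) as a set of 2×2 matrices. -/
def SO2 : Set (Matrix (Fin 2) (Fin 2) ℝ) := {R | R * R.transpose = 1 ∧ R.det = 1}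

/-- Frobenius distance to SO(2). -/
noncomputable def distSO2 (M : Matrix (Fin 2) (Fin 2) ℝ) : ℝ :=
  sInf ((fun R => frob (M - R)) '' SO2)

/-- Cofactor matrix of a 2×2 matrix: for `M = [[a,b],[c,d]]`, `Cof M = [[d,−c],[−b,a]]`. -/
def cof (M : Matrix (Fin 2) (Fin 2) ℝ) : Matrix (Fin 2) (Fin 2) ℝ :=
  !![M 1 1, -(M 1 0); -(M 0 1), M 0 0]

lemma frob_nonneg (M : Matrix (Fin 2) (Fin 2) ℝ) : 0 ≤ frob M := Real.sqrt_nonneg _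

lemma one_mem_SO2 : (1 : Matrix (Fin 2) (Fin 2) ℝ) ∈ SO2 := by
  constructor
  · simp
  · simp

lemma key (M R : Matrix (Fin 2) (Fin 2) ℝ) (hR : R ∈ SO2) :
    frob (M - cof M) ≤ 2 * frob (M - R) := by
  obtain ⟨h1, h2⟩ := hR
  have h00 := congrFun (congrFun h1 0) 0
  have h01 := congrFun (congrFun h1 0) 1
  have h11 := congrFun (congrFun h1 1) 1
  simp [Matrix.mul_apply, Fin.sum_univ_two, Matrix.one_apply, Matrix.transpose_apply] at h00 h01 h11
  rw [Matrix.det_fin_two] at h2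
  -- derive R 1 0 = -R 0 1 and R 1 1 = R 0 0
  have hc : R 1 0 = -(R 0 1) := by
    linear_combination R 0 0 * h01 - R 0 1 * h2 - R 1 0 * h00
  have hd : R 1 1 = R 0 0 := by
    linear_combination R 0 0 * h2 + R 0 1 * h01 - R 1 1 * h00
  have key2 : (∑ i, ∑ j, ((M - cof M) i j) ^ 2) ≤ 4 * (∑ i, ∑ j, ((M - R) i j) ^ 2) := by
    simp [Fin.sum_univ_two, Matrix.sub_apply, cof, hc, hd]
    nlinarith [sq_nonneg (M 0 0 + M 1 1 - 2 * R 0 0), sq_nonneg (M 0 1 - M 1 0 - 2 * R 0 1)]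
  calc frob (M - cof M) ≤ Real.sqrt (4 * (∑ i, ∑ j, ((M - R) i j) ^ 2)) :=
        Real.sqrt_le_sqrt key2
    _ = 2 * frob (M - R) := by
        rw [frob, show (4:ℝ) = 2 ^ 2 by norm_num, Real.sqrt_mul (by positivity),
          Real.sqrt_sq (by norm_num)]

/-- For every 2×2 real matrix `M`, `|M − Cof M|² ≤ 4·dist²(M, SO(2))`. -/
theorem sq_norm_sub_cof_le (M : Matrix (Fin 2) (Fin 2) ℝ) :
    (frob (M - cof M)) ^ 2 ≤ 4 * (distSO2 M) ^ 2 := by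
  have hne : ((fun R => frob (M - R)) '' SO2).Nonempty :=
    ⟨_, Set.mem_image_of_mem _ one_mem_SO2⟩
  have hb : frob (M - cof M) / 2 ≤ distSO2 M := by
    apply le_csInf hne
    rintro x ⟨R, hR, rfl⟩
    have := key M R hR
    linarith
  have h0 : 0 ≤ frob (M - cof M) := frob_nonneg _
  nlinarith [hb, h0]
end
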